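/- arXiv:2501.16940 — 5 statements merged into one kernel-verified Lean document; each statement's English description precedes it below -/
import Mathlib

section
/- If K₁ and K₂ are convex bodies of constant width 1 in ℝⁿ with K₁ ⊆ K₂, then K₁ = K₂. -/
/-! If `K₁ ⊆ K₂` then `h_{K₁} ≤ h_{K₂}` pointwise, and adding this at `u` and `-u` against
`h_{Kᵢ}(u) + h_{Kᵢ}(-u) = ‖u‖` forces `h_{K₁} = h_{K₂}`. A closed convex set is the intersection of
its supporting half-spaces (Hahn–Banach separation), so `h_{K₂} ≤ h_{K₁}` gives `K₂ ⊆ K₁`. -/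

open Set Metric Pointwise

noncomputable def suppFn {n : ℕ} (K : Set (EuclideanSpace ℝ (Fin n)))
    (u : EuclideanSpace ℝ (Fin n)) : ℝ :=
  sSup ((fun x => (inner ℝ x u : ℝ)) '' K)

def IsCW1 {n : ℕ} (K : Set (EuclideanSpace ℝ (Fin n))) : Prop :=
  IsCompact K ∧ Convex ℝ K ∧ K.Nonempty ∧ ∀ u, suppFn K u + suppFn K (-u) = ‖u‖

section SupportFunction

variable {n : ℕ} {K K₁ K₂ : Set (EuclideanSpace ℝ (Fin n))}

lemma le_suppFn (hK : IsCompact K) {x : EuclideanSpace ℝ (Fin n)} (hx : x ∈ K)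
    (u : EuclideanSpace ℝ (Fin n)) : inner ℝ x u ≤ suppFn K u :=
  le_csSup (hK.image (continuous_id.inner continuous_const)).bddAbove (mem_image_of_mem _ hx)

lemma suppFn_le (hK : K.Nonempty) {u : EuclideanSpace ℝ (Fin n)} {c : ℝ}
    (h : ∀ x ∈ K, inner ℝ x u ≤ c) : suppFn K u ≤ c :=
  csSup_le (hK.image _) (forall_mem_image.2 h)

lemma suppFn_mono (hK₂ : IsCompact K₂) (hK₁ : K₁.Nonempty) (hsub : K₁ ⊆ K₂)
    (u : EuclideanSpace ℝ (Fin n)) : suppFn K₁ u ≤ suppFn K₂ u :=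
  suppFn_le hK₁ fun _ hx => le_suppFn hK₂ (hsub hx) u

lemma exists_suppFn_lt_inner (hconv : Convex ℝ K) (hclosed : IsClosed K) (hne : K.Nonempty)
    {x : EuclideanSpace ℝ (Fin n)} (hx : x ∉ K) : ∃ u, suppFn K u < inner ℝ x u := by
  obtain ⟨f, c, hfK, hfx⟩ := geometric_hahn_banach_closed_point hconv hclosed hx
  set u := (InnerProductSpace.toDual ℝ (EuclideanSpace ℝ (Fin n))).symm f
  have hf : ∀ y, f y = inner ℝ y u := fun y => by
    rw [real_inner_comm, InnerProductSpace.toDual_symm_apply]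
  refine ⟨u, ?_⟩
  calc suppFn K u ≤ c := suppFn_le hne fun y hy => (hf y ▸ hfK y hy).le
    _ < inner ℝ x u := hf x ▸ hfx

lemma subset_of_suppFn_le (hconv₁ : Convex ℝ K₁) (hclosed₁ : IsClosed K₁) (hne₁ : K₁.Nonempty)
    (hK₂ : IsCompact K₂) (h : ∀ u, suppFn K₂ u ≤ suppFn K₁ u) : K₂ ⊆ K₁ := by
  intro x hx
  by_contra hx₁
  obtain ⟨u, hu⟩ := exists_suppFn_lt_inner hconv₁ hclosed₁ hne₁ hx₁
  exact (hu.trans_le (le_suppFn hK₂ hx u)).not_ge (h u)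

end SupportFunction

lemma IsCW1.suppFn_eq_of_subset {n : ℕ} {K₁ K₂ : Set (EuclideanSpace ℝ (Fin n))}
    (h₁ : IsCW1 K₁) (h₂ : IsCW1 K₂) (hsub : K₁ ⊆ K₂) : suppFn K₁ = suppFn K₂ := by
  funext u
  have hu := suppFn_mono h₂.1 h₁.2.2.1 hsub u
  have hnegu := suppFn_mono h₂.1 h₁.2.2.1 hsub (-u)
  linarith [h₁.2.2.2 u, h₂.2.2.2 u]

theorem stmt_3 {n : ℕ} (K₁ K₂ : Set (EuclideanSpace ℝ (Fin n)))
    (h₁ : IsCW1 K₁) (h₂ : IsCW1 K₂) (hsub : K₁ ⊆ K₂) : K₁ = K₂ := by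
  have hsupp := h₁.suppFn_eq_of_subset h₂ hsub
  exact hsub.antisymm <| subset_of_suppFn_le h₁.2.1 h₁.1.isClosed h₁.2.2.1 h₂.1 fun u =>
    (congrFun hsupp u).ge
end

section
/- Let X = {x₁,…,x_m} ⊂ ℝⁿ with diameter 1, and suppose K = (1−λ)K₀ + λK₁ is a decomposition of a constant-width body K containing X, with λ ∈ (0,1), and choose x_j⁰ ∈ K₀, x_j¹ ∈ K₁ with x_j = (1−λ)x_j⁰ + λx_j¹. If |x_i − x_j| = 1, then x_i − x_j = x_i⁰ − x_j⁰ = x_i¹ − x_j¹. -/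
/-!
A set of constant width 1 has diameter at most 1, so `x0 i - x0 j` and `x1 i - x1 j` lie in the
closed unit ball, while their convex combination `x i - x j` is a unit vector. By strict convexity
of the Euclidean ball the two endpoints coincide, and then both equal `x i - x j`.
-/

open Set Metric Pointwise

lemma inner_le_suppFn {n : ℕ} {K : Set (EuclideanSpace ℝ (Fin n))} (hK : IsCompact K)
    {a : EuclideanSpace ℝ (Fin n)} (ha : a ∈ K) (u : EuclideanSpace ℝ (Fin n)) :
    inner ℝ a u ≤ suppFn K u :=
  le_csSup (hK.image (continuous_id.inner continuous_const)).bddAbove ⟨a, ha, rfl⟩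

lemma IsCW1.norm_sub_le {n : ℕ} {K : Set (EuclideanSpace ℝ (Fin n))} (hK : IsCW1 K)
    {a b : EuclideanSpace ℝ (Fin n)} (ha : a ∈ K) (hb : b ∈ K) : ‖a - b‖ ≤ 1 := by
  obtain ⟨hcompact, -, -, hwidth⟩ := hK
  have hsq : ‖a - b‖ ^ 2 ≤ ‖a - b‖ := calc
    ‖a - b‖ ^ 2 = inner ℝ a (a - b) + inner ℝ b (-(a - b)) := by
      rw [← real_inner_self_eq_norm_sq, inner_neg_right, inner_sub_left]; ring
    _ ≤ suppFn K (a - b) + suppFn K (-(a - b)) :=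
      add_le_add (inner_le_suppFn hcompact ha _) (inner_le_suppFn hcompact hb _)
    _ = ‖a - b‖ := hwidth _
  nlinarith [norm_nonneg (a - b)]

lemma eq_of_norm_combo_eq {E : Type*} [NormedAddCommGroup E] [NormedSpace ℝ E]
    [StrictConvexSpace ℝ E] {a b : E} {t r : ℝ} (ha : ‖a‖ ≤ r) (hb : ‖b‖ ≤ r)
    (ht : t ∈ Ioo 0 1) (h : ‖(1 - t) • a + t • b‖ = r) : a = b := by
  by_contra hne
  exact (norm_combo_lt_of_ne ha hb hne (sub_pos.2 ht.2) ht.1 (sub_add_cancel 1 t)).ne h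

theorem stmt_5_general {n m : ℕ} (x x0 x1 : Fin m → EuclideanSpace ℝ (Fin n))
    (K₀ K₁ : Set (EuclideanSpace ℝ (Fin n)))
    (hK₀ : IsCW1 K₀) (hK₁ : IsCW1 K₁)
    (lam : ℝ) (hlam : lam ∈ Set.Ioo (0:ℝ) 1)
    (hx0 : ∀ j, x0 j ∈ K₀) (hx1 : ∀ j, x1 j ∈ K₁)
    (hcomb : ∀ j, x j = (1 - lam) • x0 j + lam • x1 j) :
    ∀ i j, dist (x i) (x j) = 1 →
      x i - x j = x0 i - x0 j ∧ x i - x j = x1 i - x1 j := by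
  intro i j hij
  have hsplit : x i - x j = (1 - lam) • (x0 i - x0 j) + lam • (x1 i - x1 j) := by
    rw [hcomb i, hcomb j]; module
  have hends : x0 i - x0 j = x1 i - x1 j :=
    eq_of_norm_combo_eq (hK₀.norm_sub_le (hx0 i) (hx0 j)) (hK₁.norm_sub_le (hx1 i) (hx1 j)) hlam
      (by rw [← hsplit, ← dist_eq_norm, hij])
  have hdiff : x i - x j = x0 i - x0 j := by
    rw [hsplit, ← hends, Convex.combo_self (sub_add_cancel 1 lam)]
  exact ⟨hdiff, hdiff.trans hends⟩

theorem stmt_5 {n m : ℕ} (x x0 x1 : Fin m → EuclideanSpace ℝ (Fin n))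
    (hdiam : Metric.diam (Set.range x) = 1)
    (K K₀ K₁ : Set (EuclideanSpace ℝ (Fin n)))
    (hK : IsCW1 K) (hK₀ : IsCW1 K₀) (hK₁ : IsCW1 K₁)
    (lam : ℝ) (hlam : lam ∈ Set.Ioo (0:ℝ) 1)
    (hdec : K = (1 - lam) • K₀ + lam • K₁)
    (hxK : ∀ j, x j ∈ K) (hx0 : ∀ j, x0 j ∈ K₀) (hx1 : ∀ j, x1 j ∈ K₁)
    (hcomb : ∀ j, x j = (1 - lam) • x0 j + lam • x1 j) :
    ∀ i j, dist (x i) (x j) = 1 →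
      x i - x j = x0 i - x0 j ∧ x i - x j = x1 i - x1 j :=
  stmt_5_general x x0 x1 K₀ K₁ hK₀ hK₁ lam hlam hx0 hx1 hcomb
end

section
/- Let c be the circle {y ∈ ℝ³ : y₃ = x₃, √(y₁² + y₂²) = |x₁|} for a point x = (x₁, x₃) with x₁² + x₃² ≤ 1. Then the intersection of all closed unit balls centered at points of c equals {y ∈ ℝ³ : (√(y₁² + y₂²) + |x₁|)² + (y₃ − x₃)² ≤ 1}. -/
/-!
The point of the circle `c` farthest from `y` lies horizontally opposite to `y` across the axis,
at horizontal distance `√(y₀² + y₁²) + |x₁|` and vertical distance `|y₂ - x₃|` from `y`;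
so `y` lies in every unit ball centred on `c` exactly when it lies in that farthest one.
-/

open Set Metric

-- The maximum is attained at `v = -(r / ‖u‖) • u`, or anywhere on the sphere if `u = 0`.
theorem isGreatest_norm_sub_image_sphere {E : Type*} [NormedAddCommGroup E] [NormedSpace ℝ E]
    [NontrivialTopology E] (u : E) {r : ℝ} (hr : 0 ≤ r) :
    IsGreatest ((fun v ↦ ‖u - v‖) '' sphere 0 r) (‖u‖ + r) := by
  refine ⟨?_, ?_⟩
  · by_cases hu : u = 0
    · obtain ⟨v, hv⟩ := exists_norm_eq E hr
      exact ⟨v, by simpa using hv, by simp [hu, hv]⟩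
    · have hu' : ‖u‖ ≠ 0 := norm_ne_zero_iff.mpr hu
      refine ⟨-(r / ‖u‖) • u, ?_, ?_⟩
      · simp [norm_smul, abs_of_nonneg hr, hu']
      · show ‖u - -(r / ‖u‖) • u‖ = ‖u‖ + r
        rw [neg_smul, sub_neg_eq_add, show u + (r / ‖u‖) • u = (1 + r / ‖u‖) • u by module,
          norm_smul, Real.norm_of_nonneg (by positivity)]
        field_simp
  · rintro _ ⟨v, hv, rfl⟩
    rw [mem_sphere_zero_iff_norm] at hv
    exact hv ▸ norm_sub_le u v

namespace EuclideanSpace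

def horiz (y : EuclideanSpace ℝ (Fin 3)) : EuclideanSpace ℝ (Fin 2) := !₂[y 0, y 1]

theorem horiz_sub (y p : EuclideanSpace ℝ (Fin 3)) : horiz (y - p) = horiz y - horiz p := by
  ext i; fin_cases i <;> simp [horiz]

theorem norm_horiz (y : EuclideanSpace ℝ (Fin 3)) : ‖horiz y‖ = √(y 0 ^ 2 + y 1 ^ 2) := by
  simp [horiz, EuclideanSpace.norm_eq, Fin.sum_univ_two]

theorem norm_sq_eq_norm_horiz_sq_add (y : EuclideanSpace ℝ (Fin 3)) :
    ‖y‖ ^ 2 = ‖horiz y‖ ^ 2 + y 2 ^ 2 := by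
  simp [EuclideanSpace.real_norm_sq_eq, horiz, Fin.sum_univ_two, Fin.sum_univ_three]

theorem exists_horiz_eq (q : EuclideanSpace ℝ (Fin 2)) (t : ℝ) :
    ∃ p : EuclideanSpace ℝ (Fin 3), horiz p = q ∧ p 2 = t :=
  ⟨!₂[q 0, q 1, t], by ext i; fin_cases i <;> simp [horiz], by simp⟩

end EuclideanSpace

open EuclideanSpace in
theorem stmt_8_general (x₁ x₃ : ℝ)
    (c : Set (EuclideanSpace ℝ (Fin 3)))
    (hc : c = {y : EuclideanSpace ℝ (Fin 3) |
      y 2 = x₃ ∧ Real.sqrt ((y 0) ^ 2 + (y 1) ^ 2) = |x₁|}) :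
    (⋂ p ∈ c, Metric.closedBall p 1) =
      {y : EuclideanSpace ℝ (Fin 3) |
        (Real.sqrt ((y 0) ^ 2 + (y 1) ^ 2) + |x₁|) ^ 2 + (y 2 - x₃) ^ 2 ≤ 1} := by
  subst hc
  ext y
  simp only [mem_iInter, mem_ofPred_eq, mem_closedBall, ← norm_horiz]
  have hdist : ∀ p : EuclideanSpace ℝ (Fin 3), p 2 = x₃ →
      (dist y p ≤ 1 ↔ ‖horiz y - horiz p‖ ^ 2 + (y 2 - x₃) ^ 2 ≤ 1) := by
    intro p hp
    rw [← sq_le_one_iff₀ dist_nonneg, dist_eq_norm, norm_sq_eq_norm_horiz_sq_add, horiz_sub,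
      PiLp.sub_apply, hp]
  obtain ⟨⟨q, hq, hq_max⟩, hbound⟩ := isGreatest_norm_sub_image_sphere (horiz y) (abs_nonneg x₁)
  constructor
  · intro h
    obtain ⟨p, rfl, hp⟩ := exists_horiz_eq q x₃
    rw [← hq_max, ← (hdist p hp)]
    exact h p ⟨hp, by simpa using hq⟩
  · rintro h p ⟨hp, hpr⟩
    have hle := hbound ⟨horiz p, by simpa using hpr, rfl⟩
    rw [hdist p hp]
    nlinarith [norm_nonneg (horiz y - horiz p)]

theorem stmt_8 (x₁ x₃ : ℝ) (hx : x₁ ^ 2 + x₃ ^ 2 ≤ 1)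
    (c : Set (EuclideanSpace ℝ (Fin 3)))
    (hc : c = {y : EuclideanSpace ℝ (Fin 3) |
      y 2 = x₃ ∧ Real.sqrt ((y 0) ^ 2 + (y 1) ^ 2) = |x₁|}) :
    (⋂ p ∈ c, Metric.closedBall p 1) =
      {y : EuclideanSpace ℝ (Fin 3) |
        (Real.sqrt ((y 0) ^ 2 + (y 1) ^ 2) + |x₁|) ^ 2 + (y 2 - x₃) ^ 2 ≤ 1} :=
  stmt_8_general x₁ x₃ c hc
end

section
/- For 0 < a < 1, the support function of the convex body bounded by the inner spindle torus surface T_a = {x : (√(x₁²+x₂²) + √(1−a²))² + x₃² = 1} is given by: H(u) = a·u₃ if u₃/|u| ≥ a; H(u) = |u| − √(1−a²)·√(u₁²+u₂²) if −a ≤ u₃/|u| ≤ a; H(u) = −a·u₃ if u₃/|u| ≤ −a. -/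
/-!
Write `s = √(u₀² + u₁²)`, `t = u₂` and `b = √(1 - a²)`. By Cauchy–Schwarz in the horizontal
plane, `⟪x, u⟫ ≤ r s + z t` for a point `x` of the body at horizontal radius `r` and height `z`,
with equality on the meridian half-plane through `u`. So `H(u)` is the maximum of `r s + z t` over
the planar region `r ≥ 0, (r + b)² + z² ≤ 1`: a unit disc centred at `(-b, 0)` cut by the line
`r = 0`, whose corners are `(0, ±a)`. If the disc's own maximiser `(-b, 0) + (s, t) / |u|` has
`r ≥ 0`, which is the condition `|t| ≤ a |u|`, it is the maximiser and `H(u) = |u| - b s`;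
otherwise the maximum sits at the corner `(0, a)` or `(0, -a)`.
-/

open Set Metric

theorem suppFn_eq_of_mem_of_forall_inner_le {n : ℕ} {K : Set (EuclideanSpace ℝ (Fin n))}
    {u x : EuclideanSpace ℝ (Fin n)} {V : ℝ} (hx : x ∈ K) (hxV : inner ℝ x u = V)
    (hle : ∀ y ∈ K, inner ℝ y u ≤ V) : suppFn K u = V :=
  IsGreatest.csSup_eq ⟨⟨x, hx, hxV⟩, by rintro _ ⟨y, hy, rfl⟩; exact hle y hy⟩

theorem mul_add_mul_le_sqrt_mul_sqrt (a b c d : ℝ) :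
    a * c + b * d ≤ √(a ^ 2 + b ^ 2) * √(c ^ 2 + d ^ 2) := by
  rw [← Real.sqrt_mul (by positivity)]
  exact (le_abs_self _).trans <| Real.abs_le_sqrt <| by nlinarith [sq_nonneg (a * d - b * c)]

noncomputable def horizNorm (x : EuclideanSpace ℝ (Fin 3)) : ℝ := √(x 0 ^ 2 + x 1 ^ 2)

theorem horizNorm_nonneg (x : EuclideanSpace ℝ (Fin 3)) : 0 ≤ horizNorm x := Real.sqrt_nonneg _

theorem sq_horizNorm (x : EuclideanSpace ℝ (Fin 3)) : horizNorm x ^ 2 = x 0 ^ 2 + x 1 ^ 2 :=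
  Real.sq_sqrt (by positivity)

theorem inner_fin_three (x u : EuclideanSpace ℝ (Fin 3)) :
    inner ℝ x u = x 0 * u 0 + x 1 * u 1 + x 2 * u 2 := by
  simp [PiLp.inner_apply, Fin.sum_univ_three, mul_comm]

theorem norm_sq_fin_three (u : EuclideanSpace ℝ (Fin 3)) :
    ‖u‖ ^ 2 = horizNorm u ^ 2 + u 2 ^ 2 := by
  simp [EuclideanSpace.real_norm_sq_eq, Fin.sum_univ_three, sq_horizNorm]

theorem inner_le_horizNorm_mul_add (x u : EuclideanSpace ℝ (Fin 3)) :
    inner ℝ x u ≤ horizNorm x * horizNorm u + x 2 * u 2 := by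
  rw [inner_fin_three, horizNorm, horizNorm]
  linarith [mul_add_mul_le_sqrt_mul_sqrt (x 0) (x 1) (u 0) (u 1)]

theorem mul_add_mul_le_of_sq_add_sq_le {r z s t n : ℝ} (hrz : r ^ 2 + z ^ 2 ≤ 1)
    (hn : 0 ≤ n) (hstn : n ^ 2 = s ^ 2 + t ^ 2) : r * s + z * t ≤ n := by
  nlinarith [sq_nonneg (r * t - z * s), sq_nonneg (r * s + z * t - n)]

theorem mul_add_mul_le_corner {a b r z s t : ℝ} (ha : 0 ≤ a) (hb : 0 < b) (hab : a ^ 2 + b ^ 2 = 1)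
    (hr : 0 ≤ r) (hrz : (r + b) ^ 2 + z ^ 2 ≤ 1) (hs : 0 ≤ s) (hst : a * s ≤ b * t) :
    r * s + z * t ≤ a * t := by
  have hza : z ≤ a := abs_le_of_sq_le_sq' (by nlinarith) ha |>.2
  -- `(r + b, z)` and `(b, a)` both lie in the unit disc, so their dot product is at most `1`.
  have hrb : b * r ≤ a * (a - z) := by nlinarith [sq_nonneg (r + b - b), sq_nonneg (z - a)]
  have : b * (r * s + z * t) ≤ b * (a * t) := by
    nlinarith [mul_le_mul_of_nonneg_right hrb hs, mul_le_mul_of_nonneg_left hst (sub_nonneg.2 hza)]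
  exact le_of_mul_le_mul_left this hb

def spindleBody (b : ℝ) : Set (EuclideanSpace ℝ (Fin 3)) :=
  {x | (horizNorm x + b) ^ 2 + x 2 ^ 2 ≤ 1}

theorem suppFn_spindleBody_eq {b V : ℝ} {u p : EuclideanSpace ℝ (Fin 3)}
    (hp : p ∈ spindleBody b) (hpV : inner ℝ p u = V)
    (hle : ∀ r z, 0 ≤ r → (r + b) ^ 2 + z ^ 2 ≤ 1 → r * horizNorm u + z * u 2 ≤ V) :
    suppFn (spindleBody b) u = V :=
  suppFn_eq_of_mem_of_forall_inner_le hp hpV fun x hx =>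
    (inner_le_horizNorm_mul_add x u).trans (hle _ _ (horizNorm_nonneg x) hx)

theorem pole_mem_spindleBody {b c : ℝ} (hbc : c ^ 2 + b ^ 2 = 1) : !₂[0, 0, c] ∈ spindleBody b := by
  simp [spindleBody, horizNorm]
  linarith

theorem inner_pole (c : ℝ) (u : EuclideanSpace ℝ (Fin 3)) : inner ℝ !₂[0, 0, c] u = c * u 2 := by
  simp [inner_fin_three]

theorem mul_horizNorm_le_of_mul_norm_le_abs {a b : ℝ} {u : EuclideanSpace ℝ (Fin 3)} (ha : 0 ≤ a)
    (hb : 0 ≤ b) (hab : a ^ 2 + b ^ 2 = 1) (hu : a * ‖u‖ ≤ |u 2|) :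
    a * horizNorm u ≤ b * |u 2| := by
  refine (pow_le_pow_iff_left₀ (mul_nonneg ha (horizNorm_nonneg u))
    (mul_nonneg hb (abs_nonneg _)) two_ne_zero).1 ?_
  nlinarith [norm_sq_fin_three u, sq_abs (u 2),
    pow_le_pow_left₀ (mul_nonneg ha (norm_nonneg u)) hu 2]

theorem mul_norm_le_horizNorm_of_abs_le_mul_norm {a b : ℝ} {u : EuclideanSpace ℝ (Fin 3)}
    (hb : 0 ≤ b) (hab : a ^ 2 + b ^ 2 = 1) (hu : |u 2| ≤ a * ‖u‖) : b * ‖u‖ ≤ horizNorm u := by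
  refine (pow_le_pow_iff_left₀ (mul_nonneg hb (norm_nonneg u)) (horizNorm_nonneg u)
    two_ne_zero).1 ?_
  nlinarith [norm_sq_fin_three u, sq_abs (u 2), pow_le_pow_left₀ (abs_nonneg (u 2)) hu 2]

theorem suppFn_spindleBody_of_mul_norm_le {a b : ℝ} {u : EuclideanSpace ℝ (Fin 3)} (ha : 0 ≤ a)
    (hb : 0 < b) (hab : a ^ 2 + b ^ 2 = 1) (hu : a * ‖u‖ ≤ u 2) :
    suppFn (spindleBody b) u = a * u 2 := by
  have hst := mul_horizNorm_le_of_mul_norm_le_abs ha hb.le hab (hu.trans (le_abs_self _))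
  rw [abs_of_nonneg ((mul_nonneg ha (norm_nonneg u)).trans hu)] at hst
  exact suppFn_spindleBody_eq (pole_mem_spindleBody (by linarith)) (inner_pole a u)
    fun _ _ hr hrz => mul_add_mul_le_corner ha hb hab hr hrz (horizNorm_nonneg u) hst

theorem suppFn_spindleBody_of_le_neg_mul_norm {a b : ℝ} {u : EuclideanSpace ℝ (Fin 3)}
    (ha : 0 ≤ a) (hb : 0 < b) (hab : a ^ 2 + b ^ 2 = 1) (hu : u 2 ≤ -(a * ‖u‖)) :
    suppFn (spindleBody b) u = -(a * u 2) := by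
  have hst :=
    mul_horizNorm_le_of_mul_norm_le_abs ha hb.le hab ((le_neg.1 hu).trans (neg_le_abs _))
  rw [abs_of_nonpos (hu.trans (neg_nonpos.2 (mul_nonneg ha (norm_nonneg u))))] at hst
  refine suppFn_spindleBody_eq (pole_mem_spindleBody (c := -a) (by linarith [neg_sq a]))
    (by rw [inner_pole, neg_mul]) fun r z hr hrz => ?_
  have := mul_add_mul_le_corner (z := -z) ha hb hab hr (by rwa [neg_sq]) (horizNorm_nonneg u) hst
  linarith

theorem suppFn_spindleBody_of_mul_norm_le_horizNorm {b : ℝ} {u : EuclideanSpace ℝ (Fin 3)}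
    (hb : 0 < b) (hu : u ≠ 0) (hbu : b * ‖u‖ ≤ horizNorm u) :
    suppFn (spindleBody b) u = ‖u‖ - b * horizNorm u := by
  have hsn := norm_sq_fin_three u
  have hs2 := sq_horizNorm u
  set s := horizNorm u
  set n := ‖u‖
  have hn : 0 < n := norm_pos_iff.2 hu
  have hs : 0 < s := (mul_pos hb hn).trans_le hbu
  -- The planar maximiser `(-b, 0) + (s, t) / ‖u‖`, placed in the meridian half-plane of `u`,
  -- is the point `(k u₀, k u₁, u₂ / ‖u‖)`.
  set k := n⁻¹ - b / s with hk_def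
  have hk : 0 ≤ k := sub_nonneg.2 <| by
    rw [div_le_iff₀ hs, ← div_eq_inv_mul, le_div_iff₀ hn]; exact hbu
  have hks : k * s + b = s / n := by
    rw [hk_def, sub_mul, div_mul_cancel₀ _ hs.ne', inv_mul_eq_div, sub_add_cancel]
  clear_value k
  have hpk : horizNorm !₂[k * u 0, k * u 1, u 2 / n] = k * s := by
    rw [horizNorm]
    simp only [Matrix.cons_val_zero, Matrix.cons_val_one]
    rw [show (k * u 0) ^ 2 + (k * u 1) ^ 2 = (k * s) ^ 2 by rw [mul_pow k s, hs2]; ring]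
    exact Real.sqrt_sq (mul_nonneg hk hs.le)
  refine suppFn_spindleBody_eq (p := !₂[k * u 0, k * u 1, u 2 / n]) ?_ ?_
    fun r z _ hrz => ?_
  · show (horizNorm _ + b) ^ 2 + _ ≤ 1
    simp only [hpk, Matrix.cons_val_two, Matrix.tail_cons, Matrix.head_cons]
    rw [hks, div_pow, div_pow, ← add_div, ← hsn, div_self (pow_pos hn 2).ne']
  · rw [inner_fin_three]
    simp only [Matrix.cons_val_zero, Matrix.cons_val_one, Matrix.cons_val_two,
      Matrix.head_cons, Matrix.tail_cons]
    rw [eq_div_iff hn.ne'] at hks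
    field_simp
    linear_combination (-(n * k)) * hs2 + s * hks - hsn
  · linarith [mul_add_mul_le_of_sq_add_sq_le hrz hn.le hsn]

theorem stmt_16 (a : ℝ) (ha : 0 < a) (ha1 : a < 1)
    (Ka : Set (EuclideanSpace ℝ (Fin 3)))
    (hKa : Ka = {x : EuclideanSpace ℝ (Fin 3) |
      (Real.sqrt ((x 0) ^ 2 + (x 1) ^ 2) + Real.sqrt (1 - a ^ 2)) ^ 2 + (x 2) ^ 2 ≤ 1}) :
    ∀ u : EuclideanSpace ℝ (Fin 3), u ≠ 0 →
      ((a * ‖u‖ ≤ u 2 → suppFn Ka u = a * u 2) ∧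
       (-(a * ‖u‖) ≤ u 2 → u 2 ≤ a * ‖u‖ →
          suppFn Ka u = ‖u‖ - Real.sqrt (1 - a ^ 2) * Real.sqrt ((u 0) ^ 2 + (u 1) ^ 2)) ∧
       (u 2 ≤ -(a * ‖u‖) → suppFn Ka u = -(a * u 2))) := by
  have hb : 0 < √(1 - a ^ 2) := Real.sqrt_pos.2 (by nlinarith)
  have hab : a ^ 2 + √(1 - a ^ 2) ^ 2 = 1 := by rw [Real.sq_sqrt (by nlinarith)]; ring
  have hK : Ka = spindleBody √(1 - a ^ 2) := hKa
  subst hK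
  intro u hu
  exact ⟨suppFn_spindleBody_of_mul_norm_le ha.le hb hab,
    fun h₁ h₂ => suppFn_spindleBody_of_mul_norm_le_horizNorm hb hu
      (mul_norm_le_horizNorm_of_abs_le_mul_norm hb.le hab (abs_le.2 ⟨h₁, h₂⟩)),
    suppFn_spindleBody_of_le_neg_mul_norm ha.le hb hab⟩
end

section
/- Let K ⊂ ℝ³ be a constant-width-1 body that is not a ball, given as K = B(S) := ⋂_{x∈S} B̄(x,1) for some set S ⊂ K. If K = (1−λ)K₀ + λK₁ with λ ∈ (0,1), K₀, K₁ of constant width 1, and there exists c⁰ ∈ ℝ³ with S − c⁰ ⊆ K₀, then K₀ = K − c⁰. -/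
open Set Metric Pointwise

/-!
A body `K₀` of constant width 1 has diameter at most 1, so every point of `K₀` lies within
distance 1 of each translate `s - c⁰ ∈ K₀`, `s ∈ S`. Hence `K₀` lies in the translate by `-c⁰` of
`K = ⋂_{s ∈ S} B̄(s, 1)`. The translate also has constant width 1, and of two bodies of
constant width 1 one inside the other, the support functions agree (each is squeezed by the width
identity), so the bodies coincide.
-/

section SupportFunction

variable {n : ℕ} {C D : Set (EuclideanSpace ℝ (Fin n))}

lemma IsCompact.bddAbove_image_inner (hC : IsCompact C) (u : EuclideanSpace ℝ (Fin n)) :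
    BddAbove ((fun x => (inner ℝ x u : ℝ)) '' C) :=
  (hC.image (continuous_id.inner continuous_const)).bddAbove

lemma inner_le_suppFn_s18 (hC : IsCompact C) {x : EuclideanSpace ℝ (Fin n)} (hx : x ∈ C)
    (u : EuclideanSpace ℝ (Fin n)) : inner ℝ x u ≤ suppFn C u :=
  le_csSup (hC.bddAbove_image_inner u) ⟨x, hx, rfl⟩

lemma suppFn_mono_s18 (hD : IsCompact D) (hC : C.Nonempty) (hCD : C ⊆ D)
    (u : EuclideanSpace ℝ (Fin n)) : suppFn C u ≤ suppFn D u :=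
  csSup_le_csSup (hD.bddAbove_image_inner u) (hC.image _) (image_mono hCD)

lemma suppFn_image_sub_const (hC : IsCompact C) (hne : C.Nonempty)
    (c u : EuclideanSpace ℝ (Fin n)) :
    suppFn ((· - c) '' C) u = suppFn C u - inner ℝ c u := by
  have key := (OrderIso.addRight (-inner ℝ c u)).map_csSup' (hne.image _)
    (hC.bddAbove_image_inner u)
  simp only [OrderIso.addRight_apply, image_image, ← sub_eq_add_neg] at key
  simp only [suppFn, image_image, inner_sub_left, ← key]

lemma mem_of_forall_inner_le_suppFn (hC : IsClosed C) (hconv : Convex ℝ C) (hne : C.Nonempty)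
    {x : EuclideanSpace ℝ (Fin n)} (h : ∀ u, inner ℝ x u ≤ suppFn C u) : x ∈ C := by
  by_contra hx
  obtain ⟨f, v, hfC, hfx⟩ := geometric_hahn_banach_closed_point hconv hC hx
  set w := (InnerProductSpace.toDual ℝ (EuclideanSpace ℝ (Fin n))).symm f
  have hfw : ∀ y, f y = inner ℝ y w := fun y => by
    rw [real_inner_comm, InnerProductSpace.toDual_symm_apply]
  have hsupp : suppFn C w ≤ v :=
    csSup_le (hne.image _) (by rintro _ ⟨y, hy, rfl⟩; exact (hfw y ▸ hfC y hy).le)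
  linarith [h w, hfw x]

end SupportFunction

namespace IsCW1

variable {n : ℕ} {K K₀ K₁ : Set (EuclideanSpace ℝ (Fin n))}

lemma dist_le_one (hK : IsCW1 K) {x y : EuclideanSpace ℝ (Fin n)} (hx : x ∈ K) (hy : y ∈ K) :
    dist x y ≤ 1 := by
  obtain ⟨hc, -, -, hw⟩ := hK
  rw [dist_eq_norm]
  rcases eq_or_ne (x - y) 0 with hxy | hxy
  · simp [hxy]
  have hsq : ‖x - y‖ ^ 2 ≤ ‖x - y‖ := by
    calc ‖x - y‖ ^ 2 = inner ℝ x (x - y) + inner ℝ y (-(x - y)) := by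
          rw [← real_inner_self_eq_norm_sq, inner_neg_right, inner_sub_left]; ring
      _ ≤ suppFn K (x - y) + suppFn K (-(x - y)) :=
          add_le_add (inner_le_suppFn_s18 hc hx _) (inner_le_suppFn_s18 hc hy _)
      _ = ‖x - y‖ := hw _
  nlinarith [norm_pos_iff.2 hxy]

lemma subset_iInter_closedBall (hK : IsCW1 K) {T : Set (EuclideanSpace ℝ (Fin n))}
    (hT : T ⊆ K) : K ⊆ ⋂ x ∈ T, closedBall x 1 :=
  fun _ hy => mem_iInter₂.2 fun _ hx => hK.dist_le_one hy (hT hx)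

lemma image_sub_const (hK : IsCW1 K) (c : EuclideanSpace ℝ (Fin n)) :
    IsCW1 ((· - c) '' K) := by
  obtain ⟨hc, hv, hne, hw⟩ := hK
  refine ⟨hc.image (continuous_sub_right c), ?_, hne.image _, fun u => ?_⟩
  · simpa only [sub_eq_neg_add] using hv.translate (-c)
  · rw [suppFn_image_sub_const hc hne, suppFn_image_sub_const hc hne, inner_neg_right, ← hw u]
    ring

lemma eq_of_subset (h₀ : IsCW1 K₀) (h₁ : IsCW1 K₁) (h : K₀ ⊆ K₁) : K₀ = K₁ := by
  obtain ⟨hc₀, hv₀, hne₀, hw₀⟩ := h₀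
  obtain ⟨hc₁, -, -, hw₁⟩ := h₁
  have hsupp : ∀ u, suppFn K₁ u = suppFn K₀ u := fun u => by
    linarith [suppFn_mono_s18 hc₁ hne₀ h u, suppFn_mono_s18 hc₁ hne₀ h (-u), hw₀ u, hw₁ u]
  refine h.antisymm fun x hx => mem_of_forall_inner_le_suppFn hc₀.isClosed hv₀ hne₀ fun u => ?_
  exact hsupp u ▸ inner_le_suppFn_s18 hc₁ hx u

end IsCW1

theorem stmt_18_general (K K₀ S : Set (EuclideanSpace ℝ (Fin 3)))
    (hK : IsCW1 K)
    (hKS : K = ⋂ x ∈ S, Metric.closedBall x 1)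
    (h₀ : IsCW1 K₀)
    (c0 : EuclideanSpace ℝ (Fin 3))
    (hc0 : (fun s => s - c0) '' S ⊆ K₀) :
    K₀ = (fun x => x - c0) '' K := by
  have hsub : K₀ ⊆ (fun x => x - c0) '' K := fun z hz => by
    refine ⟨z + c0, ?_, add_sub_cancel_right z c0⟩
    rw [hKS, mem_iInter₂]
    intro s hs
    have hz' := mem_iInter₂.1 (h₀.subset_iInter_closedBall hc0 hz) (s - c0) ⟨s, hs, rfl⟩
    rwa [mem_closedBall, ← dist_sub_eq_dist_add_right]
  exact h₀.eq_of_subset (hK.image_sub_const c0) hsub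

theorem stmt_18 (K K₀ K₁ S : Set (EuclideanSpace ℝ (Fin 3)))
    (hK : IsCW1 K)
    (hnotball : ¬ ∃ (c : EuclideanSpace ℝ (Fin 3)) (r : ℝ), K = Metric.closedBall c r)
    (hSK : S ⊆ K) (hKS : K = ⋂ x ∈ S, Metric.closedBall x 1)
    (lam : ℝ) (hlam : lam ∈ Set.Ioo (0:ℝ) 1)
    (h₀ : IsCW1 K₀) (h₁ : IsCW1 K₁)
    (hdec : K = (1 - lam) • K₀ + lam • K₁)
    (c0 : EuclideanSpace ℝ (Fin 3))
    (hc0 : (fun s => s - c0) '' S ⊆ K₀) :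
    K₀ = (fun x => x - c0) '' K :=
  stmt_18_general K K₀ S hK hKS h₀ c0 hc0
end
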